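/- The operator ∇⁰_Y is compatible with the module-valued inner product: for Schwartz functions f, g one has ⟨∇⁰_Y f, g⟩ + ⟨f, ∇⁰_Y g⟩ = δ_Y(⟨f,g⟩), where ⟨f,g⟩(x,y,p) = Σ_k e(-ckp(y-pν)) f(x+k,y) conj(g(x-2pμ+k, y-2pν)), (∇⁰_Y f)(x,y) = -∂f/∂y(x,y) + (πci/(2μ)) x² f(x,y), and (δ_Y ψ)(x,y,p) = -∂ψ/∂y(x,y,p) + 2πi c p (x-pμ) ψ(x,y,p). -/

import Mathlib

/-!
Termwise, `-∂_t` of the phase `e(-ckp(t - pν))` produces the factor `2πickp`, while the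
quadratic multipliers of `∇⁰_Y` on the two factors `f(x + k, t)` and `conj g(x - 2pμ + k, t - 2pν)`
combine to `(πci/2μ)((x + k)² - (x - 2pμ + k)²) = 2πicp(x - pμ) + 2πicpk`, which is exactly that
factor plus the multiplier of `δ_Y`. Summing over `k` is justified by the decay of Schwartz
functions in the first variable, uniformly in the second, which makes the series and its
termwise derivative converge uniformly.
-/

open Real

noncomputable def ip (c : ℕ) (μ ν : ℝ) (f g : ℝ → ℝ → ℂ) (x y : ℝ) (p : ℤ) : ℂ :=
  ∑' k : ℤ, Complex.exp (2 * (π : ℂ) * Complex.I *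
      (-((c : ℂ) * (k : ℂ) * (p : ℂ) * ((y : ℂ) - (p : ℂ) * (ν : ℂ)))))
    * f (x + k) y * (starRingEnd ℂ) (g (x - 2 * p * μ + k) (y - 2 * p * ν))

noncomputable def nablaY (c : ℕ) (μ : ℝ) (f : ℝ → ℝ → ℂ) (x y : ℝ) : ℂ :=
  -deriv (fun t => f x t) y + (π : ℂ) * (c : ℂ) * Complex.I / (2 * (μ : ℂ)) * (x : ℂ) ^ 2 * f x y

noncomputable def deltaY (c : ℕ) (μ : ℝ) (φ : ℝ → ℝ → ℤ → ℂ) (x y : ℝ) (p : ℤ) : ℂ :=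
  -deriv (fun t => φ x t p) y
    + 2 * (π : ℂ) * Complex.I * (c : ℂ) * (p : ℂ) * ((x : ℂ) - (p : ℂ) * (μ : ℂ)) * φ x y p

open scoped SchwartzMap LineDeriv

def RapidlyDecreasingInFst (F : ℝ → ℝ → ℂ) : Prop :=
  ∀ n : ℕ, ∃ C, ∀ a t, (1 + |a|) ^ n * ‖F a t‖ ≤ C

theorem one_add_abs_le_mul_one_add_abs (x y : ℝ) : 1 + |y| ≤ (1 + |x|) * (1 + |x + y|) := by
  have : |y| ≤ |x + y| + |x| := by simpa using abs_sub (x + y) x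
  nlinarith [abs_nonneg x, abs_nonneg (x + y)]

theorem summable_one_div_one_add_abs_int_sq : Summable fun k : ℤ => 1 / (1 + |(k : ℝ)|) ^ 2 := by
  refine Summable.of_norm_bounded_eventually (summable_one_div_int_pow.mpr one_lt_two) ?_
  filter_upwards [Filter.eventually_cofinite_ne 0] with k hk
  have : (0 : ℝ) < |(k : ℝ)| := by positivity
  rw [Real.norm_of_nonneg (by positivity), ← sq_abs (k : ℝ)]
  gcongr
  linarith

namespace RapidlyDecreasingInFst

variable {F G : ℝ → ℝ → ℂ}

theorem exists_bound (hF : RapidlyDecreasingInFst F) : ∃ C, ∀ a t, ‖F a t‖ ≤ C := by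
  obtain ⟨C, hC⟩ := hF 0
  exact ⟨C, fun a t => by simpa using hC a t⟩

theorem neg (hF : RapidlyDecreasingInFst F) : RapidlyDecreasingInFst fun a t => -F a t := by
  simpa only [RapidlyDecreasingInFst, norm_neg] using hF

theorem add (hF : RapidlyDecreasingInFst F) (hG : RapidlyDecreasingInFst G) :
    RapidlyDecreasingInFst fun a t => F a t + G a t := by
  intro n
  obtain ⟨C, hC⟩ := hF n
  obtain ⟨D, hD⟩ := hG n
  refine ⟨C + D, fun a t => ?_⟩
  calc (1 + |a|) ^ n * ‖F a t + G a t‖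
      ≤ (1 + |a|) ^ n * ‖F a t‖ + (1 + |a|) ^ n * ‖G a t‖ := by
        rw [← mul_add]; gcongr; exact norm_add_le _ _
    _ ≤ C + D := add_le_add (hC a t) (hD a t)

theorem const_mul_sq (hF : RapidlyDecreasingInFst F) (K : ℂ) :
    RapidlyDecreasingInFst fun a t => K * (a : ℂ) ^ 2 * F a t := by
  intro n
  obtain ⟨C, hC⟩ := hF (n + 2)
  refine ⟨‖K‖ * C, fun a t => ?_⟩
  have ha : a ^ 2 ≤ (1 + |a|) ^ 2 := by nlinarith [abs_nonneg a, sq_abs a]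
  calc (1 + |a|) ^ n * ‖K * (a : ℂ) ^ 2 * F a t‖ = ‖K‖ * ((1 + |a|) ^ n * a ^ 2 * ‖F a t‖) := by
        simp only [norm_mul, norm_pow, Complex.norm_real, Real.norm_eq_abs, sq_abs]; ring
    _ ≤ ‖K‖ * ((1 + |a|) ^ (n + 2) * ‖F a t‖) := by rw [pow_add]; gcongr
    _ ≤ ‖K‖ * C := by gcongr; exact hC a t

theorem exists_summable_bound (hF : RapidlyDecreasingInFst F) (x : ℝ) :
    ∃ u : ℤ → ℝ, Summable u ∧ ∀ (k : ℤ) t, (1 + |(k : ℝ)|) * ‖F (x + k) t‖ ≤ u k := by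
  obtain ⟨C, hC⟩ := hF 3
  refine ⟨fun k => (1 + |x|) ^ 3 * C * (1 / (1 + |(k : ℝ)|) ^ 2),
    summable_one_div_one_add_abs_int_sq.mul_left _, fun k t => ?_⟩
  dsimp only
  rw [mul_one_div, le_div_iff₀ (by positivity)]
  calc (1 + |(k : ℝ)|) * ‖F (x + k) t‖ * (1 + |(k : ℝ)|) ^ 2
      = (1 + |(k : ℝ)|) ^ 3 * ‖F (x + k) t‖ := by ring
    _ ≤ ((1 + |x|) * (1 + |x + k|)) ^ 3 * ‖F (x + k) t‖ := by
        gcongr; exact one_add_abs_le_mul_one_add_abs x k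
    _ = (1 + |x|) ^ 3 * ((1 + |x + k|) ^ 3 * ‖F (x + k) t‖) := by ring
    _ ≤ (1 + |x|) ^ 3 * C := by gcongr; exact hC _ _

end RapidlyDecreasingInFst

namespace SchwartzMap

theorem rapidlyDecreasingInFst (h : 𝓢(ℝ × ℝ, ℂ)) : RapidlyDecreasingInFst fun a t => h (a, t) := by
  intro n
  refine ⟨2 ^ n * (Finset.Iic (n, 0)).sup (fun m => SchwartzMap.seminorm ℝ m.1 m.2) h,
    fun a t => ?_⟩
  have hh := one_add_le_sup_seminorm_apply (𝕜 := ℝ) (m := (n, 0)) le_rfl le_rfl h (a, t)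
  rw [norm_iteratedFDeriv_zero] at hh
  refine le_trans ?_ hh
  gcongr
  exact norm_fst_le (a, t)

theorem hasDerivAt_apply_prodMk (h : 𝓢(ℝ × ℝ, ℂ)) (a t : ℝ) :
    HasDerivAt (fun s => h (a, s)) ((∂_{((0 : ℝ), (1 : ℝ))} h) (a, t)) t :=
  h.differentiableAt.hasFDerivAt.comp_hasDerivAt t
    ((hasDerivAt_const t a).prodMk (hasDerivAt_id t))

end SchwartzMap

theorem nablaY_eq (c : ℕ) (μ : ℝ) {F F' : ℝ → ℝ → ℂ}
    (hF : ∀ a t, HasDerivAt (F a) (F' a t) t) :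
    nablaY c μ F =
      fun a t => -F' a t + (π : ℂ) * c * Complex.I / (2 * μ) * (a : ℂ) ^ 2 * F a t := by
  funext a t
  rw [nablaY, (hF a t).deriv]

theorem RapidlyDecreasingInFst.nablaY (c : ℕ) (μ : ℝ) {F F' : ℝ → ℝ → ℂ}
    (hF : ∀ a t, HasDerivAt (F a) (F' a t) t)
    (hFd : RapidlyDecreasingInFst F) (hF'd : RapidlyDecreasingInFst F') :
    RapidlyDecreasingInFst (nablaY c μ F) := by
  rw [nablaY_eq c μ hF]
  exact hF'd.neg.add (hFd.const_mul_sq _)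

section InnerProductSeries

variable (c : ℕ) (μ ν : ℝ)

noncomputable def ipTerm (F G : ℝ → ℝ → ℂ) (x : ℝ) (p k : ℤ) (t : ℝ) : ℂ :=
  Complex.exp (2 * (π : ℂ) * Complex.I *
      (-((c : ℂ) * (k : ℂ) * (p : ℂ) * ((t : ℂ) - (p : ℂ) * (ν : ℂ)))))
    * F (x + k) t * (starRingEnd ℂ) (G (x - 2 * p * μ + k) (t - 2 * p * ν))

noncomputable def ipTermDeriv (F G F' G' : ℝ → ℝ → ℂ) (x : ℝ) (p k : ℤ) (t : ℝ) : ℂ :=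
  -(2 * π * Complex.I * c * k * p) * ipTerm c μ ν F G x p k t
    + ipTerm c μ ν F' G x p k t + ipTerm c μ ν F G' x p k t

variable {c μ ν} {F G F' G' : ℝ → ℝ → ℂ} (x : ℝ) (p : ℤ)

theorem ip_eq_tsum_ipTerm (t : ℝ) : ip c μ ν F G x t p = ∑' k, ipTerm c μ ν F G x p k t := rfl

theorem norm_ipTerm (k : ℤ) (t : ℝ) :
    ‖ipTerm c μ ν F G x p k t‖ = ‖F (x + k) t‖ * ‖G (x - 2 * p * μ + k) (t - 2 * p * ν)‖ := by
  have hphase : 2 * (π : ℂ) * Complex.I *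
      (-((c : ℂ) * (k : ℂ) * (p : ℂ) * ((t : ℂ) - (p : ℂ) * (ν : ℂ))))
      = ((-(2 * π * c * k * p * (t - p * ν)) : ℝ) : ℂ) * Complex.I := by
    push_cast; ring
  rw [ipTerm, norm_mul, norm_mul, hphase, Complex.norm_exp_ofReal_mul_I, one_mul,
    RCLike.norm_conj]

theorem hasDerivAt_ipTerm (hF : ∀ a t, HasDerivAt (F a) (F' a t) t)
    (hG : ∀ a t, HasDerivAt (G a) (G' a t) t) (k : ℤ) (t : ℝ) :
    HasDerivAt (ipTerm c μ ν F G x p k) (ipTermDeriv c μ ν F G F' G' x p k t) t := by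
  have hphase : HasDerivAt (fun s : ℝ => Complex.exp (2 * (π : ℂ) * Complex.I *
      (-((c : ℂ) * (k : ℂ) * (p : ℂ) * ((s : ℂ) - (p : ℂ) * (ν : ℂ))))))
      (Complex.exp (2 * (π : ℂ) * Complex.I *
        (-((c : ℂ) * (k : ℂ) * (p : ℂ) * ((t : ℂ) - (p : ℂ) * (ν : ℂ)))))
        * (2 * (π : ℂ) * Complex.I * (-((c : ℂ) * (k : ℂ) * (p : ℂ) * 1)))) t :=
    (((Complex.ofRealCLM.hasDerivAt.sub_const _).const_mul _).neg.const_mul _).cexp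
  have hGshift : HasDerivAt (fun s => G (x - 2 * p * μ + k) (s - 2 * p * ν))
      (G' (x - 2 * p * μ + k) (t - 2 * p * ν)) t := by
    simpa using (hG (x - 2 * p * μ + k) (t - 2 * p * ν)).comp_sub_const t (2 * p * ν)
  refine ((hphase.mul (hF (x + k) t)).mul hGshift.star).congr_deriv ?_
  simp only [ipTermDeriv, ipTerm, Complex.star_def, Pi.mul_apply]
  ring

variable {C C' : ℝ}

theorem exists_summable_bound_ipTerm (hF : RapidlyDecreasingInFst F) (hG : ∀ a t, ‖G a t‖ ≤ C) :
    ∃ u : ℤ → ℝ, Summable u ∧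
      ∀ (k : ℤ) t, (1 + |(k : ℝ)|) * ‖ipTerm c μ ν F G x p k t‖ ≤ u k := by
  obtain ⟨u, hu, hFu⟩ := hF.exists_summable_bound x
  refine ⟨fun k => u k * C, hu.mul_right C, fun k t => ?_⟩
  rw [norm_ipTerm, ← mul_assoc]
  exact mul_le_mul (hFu k t) (hG _ _) (norm_nonneg _) (le_trans (by positivity) (hFu k t))

theorem summable_ipTerm (hF : RapidlyDecreasingInFst F) (hG : ∀ a t, ‖G a t‖ ≤ C) (t : ℝ) :
    Summable fun k => ipTerm c μ ν F G x p k t := by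
  obtain ⟨u, hu, hbound⟩ := exists_summable_bound_ipTerm (c := c) (μ := μ) (ν := ν) x p hF hG
  refine Summable.of_norm_bounded hu fun k => le_trans ?_ (hbound k t)
  exact le_mul_of_one_le_left (norm_nonneg _) (by linarith [abs_nonneg (k : ℝ)])

theorem exists_summable_bound_ipTermDeriv (hFd : RapidlyDecreasingInFst F)
    (hF'd : RapidlyDecreasingInFst F') (hG : ∀ a t, ‖G a t‖ ≤ C) (hG' : ∀ a t, ‖G' a t‖ ≤ C') :
    ∃ u : ℤ → ℝ, Summable u ∧ ∀ (k : ℤ) t, ‖ipTermDeriv c μ ν F G F' G' x p k t‖ ≤ u k := by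
  obtain ⟨u₁, hu₁, h₁⟩ := exists_summable_bound_ipTerm (c := c) (μ := μ) (ν := ν) x p hFd hG
  obtain ⟨u₂, hu₂, h₂⟩ := exists_summable_bound_ipTerm (c := c) (μ := μ) (ν := ν) x p hF'd hG
  obtain ⟨u₃, hu₃, h₃⟩ := exists_summable_bound_ipTerm (c := c) (μ := μ) (ν := ν) x p hFd hG'
  refine ⟨fun k => 2 * π * c * |(p : ℝ)| * u₁ k + u₂ k + u₃ k,
    ((hu₁.mul_left _).add hu₂).add hu₃, fun k t => ?_⟩
  have hweight : ‖-(2 * π * Complex.I * c * k * p) * ipTerm c μ ν F G x p k t‖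
      ≤ 2 * π * c * |(p : ℝ)| * u₁ k := by
    calc ‖-(2 * π * Complex.I * c * k * p) * ipTerm c μ ν F G x p k t‖
        = 2 * π * c * |(p : ℝ)| * (|(k : ℝ)| * ‖ipTerm c μ ν F G x p k t‖) := by
          simp only [neg_mul, norm_neg, Complex.norm_mul, Complex.norm_ofNat, Complex.norm_real,
            norm_eq_abs, abs_of_pos pi_pos, Complex.norm_I, mul_one, RCLike.norm_natCast,
            Complex.norm_intCast]
          ring
      _ ≤ 2 * π * c * |(p : ℝ)| * u₁ k := by gcongr; exact le_trans (by gcongr; linarith) (h₁ k t)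
  have hunweighted {T : ℂ} {v : ℝ} (hT : (1 + |(k : ℝ)|) * ‖T‖ ≤ v) : ‖T‖ ≤ v :=
    le_trans (le_mul_of_one_le_left (norm_nonneg _) (by linarith [abs_nonneg (k : ℝ)])) hT
  exact (norm_add₃_le).trans (add_le_add_three hweight (hunweighted (h₂ k t))
    (hunweighted (h₃ k t)))

theorem hasDerivAt_ip (hF : ∀ a t, HasDerivAt (F a) (F' a t) t)
    (hG : ∀ a t, HasDerivAt (G a) (G' a t) t) (hFd : RapidlyDecreasingInFst F)
    (hF'd : RapidlyDecreasingInFst F') (hGb : ∀ a t, ‖G a t‖ ≤ C) (hG'b : ∀ a t, ‖G' a t‖ ≤ C')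
    (y : ℝ) :
    HasDerivAt (fun t => ip c μ ν F G x t p) (∑' k, ipTermDeriv c μ ν F G F' G' x p k y) y := by
  obtain ⟨u, hu, hbound⟩ := exists_summable_bound_ipTermDeriv x p hFd hF'd hGb hG'b
  exact hasDerivAt_tsum hu (fun k t => hasDerivAt_ipTerm x p hF hG k t) hbound
    (summable_ipTerm x p hFd hGb y) y

theorem ipTerm_nablaY_add_ipTerm_nablaY (hμ : μ ≠ 0) (hF : ∀ a t, HasDerivAt (F a) (F' a t) t)
    (hG : ∀ a t, HasDerivAt (G a) (G' a t) t) (k : ℤ) (t : ℝ) :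
    ipTerm c μ ν (nablaY c μ F) G x p k t + ipTerm c μ ν F (nablaY c μ G) x p k t
      = -ipTermDeriv c μ ν F G F' G' x p k t
        + 2 * π * Complex.I * c * p * (x - p * μ) * ipTerm c μ ν F G x p k t := by
  have hμ' : (μ : ℂ) ≠ 0 := Complex.ofReal_ne_zero.mpr hμ
  rw [nablaY_eq c μ hF, nablaY_eq c μ hG]
  simp only [ipTermDeriv, ipTerm, map_add, map_neg, map_mul, map_div₀, map_pow,
    Complex.conj_ofReal, Complex.conj_I, map_natCast, map_ofNat]
  push_cast
  field_simp
  ring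

theorem ip_nablaY_add_ip_nablaY (hμ : μ ≠ 0) (hF : ∀ a t, HasDerivAt (F a) (F' a t) t)
    (hG : ∀ a t, HasDerivAt (G a) (G' a t) t) (hFd : RapidlyDecreasingInFst F)
    (hF'd : RapidlyDecreasingInFst F') (hGd : RapidlyDecreasingInFst G)
    (hG'd : RapidlyDecreasingInFst G') (y : ℝ) :
    ip c μ ν (nablaY c μ F) G x y p + ip c μ ν F (nablaY c μ G) x y p
      = deltaY c μ (ip c μ ν F G) x y p := by
  obtain ⟨C, hGb⟩ := hGd.exists_bound
  obtain ⟨C', hG'b⟩ := hG'd.exists_bound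
  obtain ⟨C'', hnablaGb⟩ := (hGd.nablaY c μ hG hG'd).exists_bound
  obtain ⟨u, hu, hbound⟩ := exists_summable_bound_ipTermDeriv (c := c) (μ := μ) (ν := ν)
    x p hFd hF'd hGb hG'b
  have hsum := summable_ipTerm (c := c) (μ := μ) (ν := ν) x p hFd hGb y
  calc ip c μ ν (nablaY c μ F) G x y p + ip c μ ν F (nablaY c μ G) x y p
      = ∑' k, (ipTerm c μ ν (nablaY c μ F) G x p k y + ipTerm c μ ν F (nablaY c μ G) x p k y) :=
        ((summable_ipTerm x p (hFd.nablaY c μ hF hF'd) hGb y).tsum_add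
          (summable_ipTerm x p hFd hnablaGb y)).symm
    _ = ∑' k, (-ipTermDeriv c μ ν F G F' G' x p k y
          + 2 * π * Complex.I * c * p * (x - p * μ) * ipTerm c μ ν F G x p k y) :=
        tsum_congr fun k => ipTerm_nablaY_add_ipTerm_nablaY x p hμ hF hG k y
    _ = -∑' k, ipTermDeriv c μ ν F G F' G' x p k y
          + 2 * π * Complex.I * c * p * (x - p * μ) * ip c μ ν F G x y p := by
        rw [(Summable.of_norm_bounded hu fun k => hbound k y).neg.tsum_add (hsum.mul_left _),
          tsum_neg, tsum_mul_left, ip_eq_tsum_ipTerm]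
    _ = deltaY c μ (ip c μ ν F G) x y p := by
        rw [deltaY, (hasDerivAt_ip x p hF hG hFd hF'd hGb hG'b y).deriv]

end InnerProductSeries

theorem stmt6_general (c : ℕ) (μ ν : ℝ) (hμ : μ ≠ 0)
    (f g : SchwartzMap (ℝ × ℝ) ℂ) :
    ∀ (x y : ℝ) (p : ℤ),
      ip c μ ν (nablaY c μ (fun a b => f (a, b))) (fun a b => g (a, b)) x y p
          + ip c μ ν (fun a b => f (a, b)) (nablaY c μ (fun a b => g (a, b))) x y p
        = deltaY c μ (ip c μ ν (fun a b => f (a, b)) (fun a b => g (a, b))) x y p :=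
  fun x y p => ip_nablaY_add_ip_nablaY x p hμ f.hasDerivAt_apply_prodMk g.hasDerivAt_apply_prodMk
    f.rapidlyDecreasingInFst (∂_{((0 : ℝ), (1 : ℝ))} f).rapidlyDecreasingInFst
    g.rapidlyDecreasingInFst (∂_{((0 : ℝ), (1 : ℝ))} g).rapidlyDecreasingInFst y

/-- ∇⁰_Y is compatible with the module-valued inner product:
⟨∇⁰_Y f, g⟩ + ⟨f, ∇⁰_Y g⟩ = δ_Y(⟨f,g⟩). -/
theorem stmt6 (c : ℕ) (hc : 0 < c) (μ ν : ℝ) (hμ : μ ≠ 0) (hν : ν ≠ 0)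
    (f g : SchwartzMap (ℝ × ℝ) ℂ) :
    ∀ (x y : ℝ) (p : ℤ),
      ip c μ ν (nablaY c μ (fun a b => f (a, b))) (fun a b => g (a, b)) x y p
          + ip c μ ν (fun a b => f (a, b)) (nablaY c μ (fun a b => g (a, b))) x y p
        = deltaY c μ (ip c μ ν (fun a b => f (a, b)) (fun a b => g (a, b))) x y p :=
  stmt6_general c μ ν hμ f g
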